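/- For the Gaussian family f_σ(s) = exp(−s²/(2σ²)), if ŝ satisfies Aŝ = x and F_σ(ŝ) ≥ m − (n−k), where A is an n×m URP matrix with unit columns and s⁰ is a solution with ‖s⁰‖₀ = k ≤ n/2, then ‖ŝ − s⁰‖ < (M+1)·m·σ·√(2 ln m). -/

import Mathlib

open Matrix Finset Filter

noncomputable def vnorm {k : ℕ} (s : Fin k → ℝ) : ℝ := Real.sqrt (∑ i, (s i)^2)

noncomputable def mnorm {p q : ℕ} (L : Matrix (Fin p) (Fin q) ℝ) : ℝ :=
  Real.sqrt (∑ i, ∑ j, (L i j)^2)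

def URP {n m : ℕ} (A : Matrix (Fin n) (Fin m) ℝ) : Prop :=
  ∀ g : Fin n → Fin m, Function.Injective g → (A.submatrix id g).det ≠ 0

def UnitCols {n m : ℕ} (A : Matrix (Fin n) (Fin m) ℝ) : Prop :=
  ∀ j, vnorm (fun i => A i j) = 1

def LeftInvBound {n m : ℕ} (A : Matrix (Fin n) (Fin m) ℝ) (M : ℝ) : Prop :=
  ∀ (k : ℕ), k ≤ n → ∀ g : Fin k → Fin m, Function.Injective g →
    ∃ L : Matrix (Fin k) (Fin n) ℝ, L * A.submatrix id g = 1 ∧ mnorm L ≤ M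

/-!
Let `d = ŝ - s⁰`, so `A d = 0`. A coordinate with `|ŝᵢ| > ε := σ √(2 ln m)` contributes less than
`1/m` to `F_σ(ŝ)` and every other one at most `1`, so the bound on `F_σ(ŝ)` leaves at most `n - k`
such coordinates. Together with the support of `s⁰` they form a set `S` of at most `n` columns, off
which `|dᵢ| ≤ ε`. Write `d = d_S + d_{Sᶜ}`: the part on `S` is recovered from `A d_S = -A d_{Sᶜ}` by
a left inverse of norm at most `M`, and unit columns give `‖A d_{Sᶜ}‖ ≤ m ε`. Hence
`‖d‖ ≤ M m ε + √m ε < (M + 1) m ε`.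
-/

section Vnorm

lemma vnorm_eq_norm {k : ℕ} (s : Fin k → ℝ) :
    vnorm s = ‖(WithLp.toLp 2 s : EuclideanSpace ℝ (Fin k))‖ := by
  simp [EuclideanSpace.norm_eq, vnorm]

lemma vnorm_nonneg {k : ℕ} (s : Fin k → ℝ) : 0 ≤ vnorm s := Real.sqrt_nonneg _

lemma vnorm_add_le {k : ℕ} (a b : Fin k → ℝ) : vnorm (a + b) ≤ vnorm a + vnorm b := by
  simpa only [vnorm_eq_norm, WithLp.toLp_add] using norm_add_le _ _

lemma vnorm_neg {k : ℕ} (a : Fin k → ℝ) : vnorm (-a) = vnorm a := by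
  simp only [vnorm_eq_norm, WithLp.toLp_neg, norm_neg]

lemma vnorm_le_sqrt_mul_of_abs_le {k : ℕ} {s : Fin k → ℝ} {c : ℝ} (hc : 0 ≤ c)
    (hs : ∀ i, |s i| ≤ c) : vnorm s ≤ √k * c := by
  calc vnorm s ≤ √(∑ _i : Fin k, c ^ 2) :=
        Real.sqrt_le_sqrt (sum_le_sum fun i _ => sq_le_sq' (abs_le.1 (hs i)).1 (abs_le.1 (hs i)).2)
    _ = √k * c := by
        rw [sum_const, card_univ, Fintype.card_fin, nsmul_eq_mul, Real.sqrt_mul (by positivity),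
          Real.sqrt_sq hc]

lemma vnorm_mulVec_le_mnorm_mul {p q : ℕ} (L : Matrix (Fin p) (Fin q) ℝ) (v : Fin q → ℝ) :
    vnorm (L *ᵥ v) ≤ mnorm L * vnorm v := by
  rw [vnorm, vnorm, mnorm, ← Real.sqrt_mul (by positivity), sum_mul]
  gcongr with i
  exact sum_mul_sq_le_sq_mul_sq univ (L i) v

lemma vnorm_mulVec_le_sum {n m : ℕ} (A : Matrix (Fin n) (Fin m) ℝ) (v : Fin m → ℝ) :
    vnorm (A *ᵥ v) ≤ ∑ j, |v j| * vnorm (fun i => A i j) := by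
  have hAv : A *ᵥ v = ∑ j, v j • (fun i => A i j) := by
    ext i
    simp [mulVec, dotProduct, Finset.sum_apply, mul_comm]
  simp only [vnorm_eq_norm, hAv, WithLp.toLp_sum, WithLp.toLp_smul]
  refine (norm_sum_le _ _).trans (le_of_eq ?_)
  simp only [norm_smul, Real.norm_eq_abs]

lemma vnorm_comp_of_injective {r m : ℕ} {g : Fin r → Fin m} (hg : Function.Injective g)
    {v : Fin m → ℝ} (hv : ∀ i ∉ Set.range g, v i = 0) : vnorm (v ∘ g) = vnorm v := by
  rw [vnorm, vnorm, Fintype.sum_of_injective g hg (fun i => (v ∘ g) i ^ 2) (fun i => v i ^ 2)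
    (by simp_all) fun _ => rfl]

end Vnorm

lemma UnitCols.rows_pos {n m : ℕ} {A : Matrix (Fin n) (Fin m) ℝ} (hA : UnitCols A) (hm : 0 < m) :
    0 < n := by
  obtain rfl | hn := Nat.eq_zero_or_pos n
  · simpa [vnorm] using hA ⟨0, hm⟩
  · exact hn

lemma UnitCols.vnorm_mulVec_le {n m : ℕ} {A : Matrix (Fin n) (Fin m) ℝ} (hA : UnitCols A)
    {v : Fin m → ℝ} {c : ℝ} (hv : ∀ j, |v j| ≤ c) : vnorm (A *ᵥ v) ≤ m * c := by
  calc vnorm (A *ᵥ v) ≤ ∑ j, |v j| * vnorm (fun i => A i j) := vnorm_mulVec_le_sum A v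
    _ ≤ ∑ _j : Fin m, c := sum_le_sum fun j _ => by rw [hA j, mul_one]; exact hv j
    _ = m * c := by simp

namespace LeftInvBound

variable {n m : ℕ} {A : Matrix (Fin n) (Fin m) ℝ} {M : ℝ}

lemma nonneg (hM : LeftInvBound A M) : 0 ≤ M := by
  obtain ⟨L, -, hL⟩ := hM 0 n.zero_le Fin.elim0 fun a => a.elim0
  exact (Real.sqrt_nonneg _).trans hL

lemma vnorm_le_mul (hM : LeftInvBound A M) (S : Finset (Fin m)) (hS : #S ≤ n)
    {v : Fin m → ℝ} (hv : ∀ i ∉ S, v i = 0) : vnorm v ≤ M * vnorm (A *ᵥ v) := by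
  set g := S.orderEmbOfFin rfl
  have hv' : ∀ i ∉ Set.range g, v i = 0 := by
    rw [range_orderEmbOfFin]
    exact hv
  obtain ⟨L, hL, hLM⟩ := hM _ hS g g.injective
  have hA : A.submatrix id g *ᵥ (v ∘ g) = A *ᵥ v := by
    ext i
    exact Fintype.sum_of_injective g g.injective _ _ (fun j hj => by simp [hv' j hj]) fun _ => rfl
  calc vnorm v = vnorm (v ∘ g) := (vnorm_comp_of_injective g.injective hv').symm
    _ = vnorm (L *ᵥ (A *ᵥ v)) := by rw [← hA, mulVec_mulVec, hL, one_mulVec]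
    _ ≤ mnorm L * vnorm (A *ᵥ v) := vnorm_mulVec_le_mnorm_mul _ _
    _ ≤ M * vnorm (A *ᵥ v) := mul_le_mul_of_nonneg_right hLM (vnorm_nonneg _)

end LeftInvBound

lemma vnorm_lt_of_mulVec_eq_zero {n m : ℕ} {A : Matrix (Fin n) (Fin m) ℝ} {M ε : ℝ}
    (hA : UnitCols A) (hM : LeftInvBound A M) (hm : 2 ≤ m) (hε : 0 < ε)
    {d : Fin m → ℝ} (hd : A *ᵥ d = 0) (S : Finset (Fin m)) (hS : #S ≤ n)
    (hdS : ∀ i ∉ S, |d i| ≤ ε) : vnorm d < (M + 1) * m * ε := by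
  set dS := (S : Set (Fin m)).indicator d
  set dSc := (S : Set (Fin m))ᶜ.indicator d
  have hsplit : dS + dSc = d := Set.indicator_self_add_compl _ _
  have hdSc : ∀ i, |dSc i| ≤ ε := by
    intro i
    by_cases hi : i ∈ S
    · simp [dSc, hi, hε.le]
    · simp [dSc, hi, hdS i hi]
  have hAdS : A *ᵥ dS = -(A *ᵥ dSc) := by
    rw [eq_neg_iff_add_eq_zero, ← mulVec_add, hsplit, hd]
  have hdS_le : vnorm dS ≤ M * (m * ε) := by
    refine (hM.vnorm_le_mul S hS fun i hi => Set.indicator_of_notMem hi d).trans ?_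
    rw [hAdS, vnorm_neg]
    exact mul_le_mul_of_nonneg_left (hA.vnorm_mulVec_le hdSc) hM.nonneg
  have hsqrt : √(m : ℝ) < m := by
    have : (2 : ℝ) ≤ m := by exact_mod_cast hm
    rw [Real.sqrt_lt' (by positivity)]
    nlinarith
  have hdSc_lt : vnorm dSc < m * ε :=
    (vnorm_le_sqrt_mul_of_abs_le hε.le hdSc).trans_lt (mul_lt_mul_of_pos_right hsqrt hε)
  calc vnorm d = vnorm (dS + dSc) := by rw [hsplit]
    _ ≤ vnorm dS + vnorm dSc := vnorm_add_le _ _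
    _ < M * (m * ε) + m * ε := by linarith
    _ = (M + 1) * m * ε := by ring

lemma exp_neg_sq_div_le_one (σ s : ℝ) : Real.exp (-s ^ 2 / (2 * σ ^ 2)) ≤ 1 :=
  Real.exp_le_one_iff.2 (by rw [neg_div]; exact neg_nonpos.2 (by positivity))

lemma exp_neg_sq_div_lt_inv {σ t s : ℝ} (hσ : 0 < σ) (ht : 1 ≤ t)
    (hs : σ * √(2 * Real.log t) < |s|) : Real.exp (-s ^ 2 / (2 * σ ^ 2)) < t⁻¹ := by
  have hlog : 0 ≤ Real.log t := Real.log_nonneg ht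
  have hsq : σ ^ 2 * (2 * Real.log t) < s ^ 2 := by
    have := pow_lt_pow_left₀ hs (by positivity) two_ne_zero
    rwa [mul_pow, Real.sq_sqrt (by positivity), sq_abs] at this
  rw [← Real.exp_log (by linarith : 0 < t), ← Real.exp_neg, Real.exp_lt_exp,
    div_lt_iff₀ (by positivity)]
  linarith

lemma sum_lt_card_sub_card_add_one {ι : Type*} [Fintype ι] [DecidableEq ι] {f : ι → ℝ}
    (T : Finset ι) (hf : ∀ i, f i ≤ 1) (hT : ∀ i ∈ T, f i < (Fintype.card ι : ℝ)⁻¹) :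
    ∑ i, f i < Fintype.card ι - #T + 1 := by
  have hTc : ∑ i ∈ Tᶜ, f i ≤ Fintype.card ι - #T := by
    rw [← Nat.cast_sub (card_le_univ T), ← card_compl]
    simpa using sum_le_sum fun i (_ : i ∈ Tᶜ) => hf i
  have hTsum : ∑ i ∈ T, f i < 1 := by
    obtain rfl | hne := T.eq_empty_or_nonempty
    · simp
    calc ∑ i ∈ T, f i < ∑ _i ∈ T, (Fintype.card ι : ℝ)⁻¹ := sum_lt_sum_of_nonempty hne hT
      _ = #T / Fintype.card ι := by rw [sum_const, nsmul_eq_mul, div_eq_mul_inv]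
      _ ≤ 1 := div_le_one_of_le₀ (by exact_mod_cast card_le_univ T) (Nat.cast_nonneg _)
  rw [← sum_add_sum_compl T]
  linarith

theorem stmt3_general {n m : ℕ} (hnm : n < m) (A : Matrix (Fin n) (Fin m) ℝ)
    (hcols : UnitCols A) (M : ℝ) (hM : LeftInvBound A M)
    (σ : ℝ) (hσ : 0 < σ)
    (x : Fin n → ℝ) (k : ℕ)
    (s0 : Fin m → ℝ) (hs0 : A.mulVec s0 = x)
    (hs0k : (Finset.univ.filter fun i => s0 i ≠ 0).card = k)
    (shat : Fin m → ℝ) (hshat : A.mulVec shat = x)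
    (hF : (m : ℝ) - ((n : ℝ) - k) ≤ ∑ i, Real.exp (-(shat i) ^ 2 / (2 * σ ^ 2))) :
    vnorm (shat - s0) < (M + 1) * m * σ * Real.sqrt (2 * Real.log m) := by
  have hm : 2 ≤ m := by
    have := hcols.rows_pos (by omega)
    omega
  have hm1 : (1 : ℝ) < m := by exact_mod_cast hm
  set ε := σ * √(2 * Real.log m)
  have hε : 0 < ε := mul_pos hσ (Real.sqrt_pos.2 (by linarith [Real.log_pos hm1]))
  set T := univ.filter fun i => ε < |shat i|
  have hT : #T + k ≤ n := by
    have hsum := sum_lt_card_sub_card_add_one T (fun i => exp_neg_sq_div_le_one σ (shat i))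
      fun i hi => by simpa using exp_neg_sq_div_lt_inv hσ hm1.le (mem_filter.1 hi).2
    rw [Fintype.card_fin] at hsum
    have : (#T + k : ℝ) < n + 1 := by linarith
    exact Nat.lt_succ_iff.1 (by exact_mod_cast this)
  set S := (univ.filter fun i => s0 i ≠ 0) ∪ T
  have hS : #S ≤ n := (card_union_le _ _).trans (by omega)
  have hoff : ∀ i ∉ S, |(shat - s0) i| ≤ ε := by
    intro i hi
    simp only [S, T, mem_union, mem_filter, mem_univ, true_and, not_or, not_not, not_lt] at hi
    simpa [hi.1] using hi.2
  have hd : A *ᵥ (shat - s0) = 0 := by rw [mulVec_sub, hs0, hshat, sub_self]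
  exact (vnorm_lt_of_mulVec_eq_zero hcols hM hm hε hd S hS hoff).trans_eq (by ring)

theorem stmt3 {n m : ℕ} (hnm : n < m) (A : Matrix (Fin n) (Fin m) ℝ)
    (hcols : UnitCols A) (hURP : URP A) (M : ℝ) (hM : LeftInvBound A M)
    (σ : ℝ) (hσ : 0 < σ)
    (x : Fin n → ℝ) (k : ℕ) (hk : 2 * k ≤ n)
    (s0 : Fin m → ℝ) (hs0 : A.mulVec s0 = x)
    (hs0k : (Finset.univ.filter fun i => s0 i ≠ 0).card = k)
    (shat : Fin m → ℝ) (hshat : A.mulVec shat = x)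
    (hF : (m : ℝ) - ((n : ℝ) - k) ≤ ∑ i, Real.exp (-(shat i) ^ 2 / (2 * σ ^ 2))) :
    vnorm (shat - s0) < (M + 1) * m * σ * Real.sqrt (2 * Real.log m) :=
  stmt3_general hnm A hcols M hM σ hσ x k s0 hs0 hs0k shat hshat hF
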